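/- arXiv:1906.07227 — 2 statements merged into one kernel-verified Lean document; each statement's English description precedes it below -/
import Mathlib

section
/- Let (V, ‖·‖) be a real Banach space and let F ∈ C^1(V; ℝ) satisfy: (1) F(0) = 0; (2) there exist λ > 0 and R > 0 such that F(u) ≥ λ for all u ∈ V with ‖u‖ = R; (3) there exists v₀ ∈ V with liminf_{t→+∞} F(t v₀) < 0. Let t₀ > 0 be such that ‖t₀ v₀‖ > R and F(t₀ v₀) < 0, and define c = inf_{γ ∈ Γ} sup_{t ∈ [0,1]} F(γ(t)), where Γ = {γ ∈ C([0,1], V) : γ(0) = 0 and γ(1) = t₀ v₀}. Then there exists a sequence {u_n} ⊂ V with F(u_n) → c and F'(u_n) → 0 strongly in the dual V'. -/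
open Filter

section Aux
open Metric Set

lemma weak_ekeland {X : Type*} [MetricSpace X] [CompleteSpace X]
    (φ : X → ℝ) (hφ : Continuous φ) (B : ℝ) (hB : ∀ x, B ≤ φ x)
    (ε : ℝ) (hε : 0 < ε) (x₀ : X) :
    ∃ x : X, φ x ≤ φ x₀ ∧ ∀ y : X, φ x ≤ φ y + ε * dist x y := by
  classical
  -- the "better than" set
  set S : X → Set X := fun x => {y | φ y + ε * dist x y ≤ φ x} with hS
  have hself : ∀ x, x ∈ S x := by intro x; simp [hS]
  have hSne : ∀ x, (S x).Nonempty := fun x => ⟨x, hself x⟩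
  have hbdd : ∀ x, BddBelow (φ '' S x) := fun x => ⟨B, by rintro m ⟨y, _, rfl⟩; exact hB y⟩
  have hex : ∀ (x : X) (n : ℕ), ∃ y, y ∈ S x ∧ φ y ≤ sInf (φ '' S x) + (1/2)^n := by
    intro x n
    obtain ⟨m, ⟨y, hy, rfl⟩, hm⟩ := exists_lt_of_csInf_lt ((hSne x).image φ)
      (lt_add_of_pos_right _ (by positivity : (0:ℝ) < (1/2)^n))
    exact ⟨y, hy, hm.le⟩
  choose g hg1 hg2 using hex
  -- the sequence
  let u : ℕ → X := fun n => Nat.rec x₀ (fun n x => g x n) n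
  have hu0 : u 0 = x₀ := rfl
  have hus : ∀ n, u (n+1) = g (u n) n := fun n => rfl
  have hmem : ∀ n, u (n+1) ∈ S (u n) := fun n => hg1 (u n) n
  have htrans : ∀ x y z, y ∈ S x → z ∈ S y → z ∈ S x := by
    intro x y z hy hz
    simp only [hS, Set.mem_setOf_eq] at *
    have := dist_triangle x y z
    nlinarith [hε.le]
  have hchain : ∀ n m, n ≤ m → u m ∈ S (u n) := by
    intro n m h
    induction m with
    | zero => simpa [Nat.le_zero.mp h] using hself (u 0)
    | succ m ih =>
      rcases Nat.lt_or_ge n (m+1) with h' | h'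
      · exact htrans _ _ _ (ih (Nat.lt_succ_iff.mp h')) (hmem m)
      · have : n = m + 1 := le_antisymm h h'
        subst this; exact hself _
  have hmono : ∀ n m, n ≤ m → φ (u m) ≤ φ (u n) := by
    intro n m h
    have := hchain n m h
    simp only [hS, Set.mem_setOf_eq] at this
    nlinarith [dist_nonneg (x := u n) (y := u m)]
  -- limit of values
  have hbelow : ∀ n, B ≤ φ (u n) := fun n => hB _
  set L := ⨅ n, φ (u n) with hL
  have hbddv : BddBelow (Set.range fun n => φ (u n)) := ⟨B, by rintro m ⟨n, rfl⟩; exact hB _⟩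
  have hLle : ∀ n, L ≤ φ (u n) := fun n => ciInf_le hbddv n
  have htendL : Tendsto (fun n => φ (u n)) atTop (nhds L) :=
    tendsto_atTop_ciInf (fun n m h => hmono n m h) hbddv
  -- Cauchy
  have hdist : ∀ n m, n ≤ m → ε * dist (u n) (u m) ≤ φ (u n) - φ (u m) := by
    intro n m h
    have := hchain n m h
    simp only [hS, Set.mem_setOf_eq] at this
    linarith
  have hcauchy : CauchySeq u := by
    apply cauchySeq_of_le_tendsto_0 (fun n => 2 * (φ (u n) - L) / ε)
    · intro n m N hn hm
      have d1 : dist (u N) (u n) ≤ (φ (u N) - φ (u n)) / ε := by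
        rw [div_eq_inv_mul, le_inv_mul_iff₀ hε]; linarith [hdist N n hn]
      have d2 : dist (u N) (u m) ≤ (φ (u N) - φ (u m)) / ε := by
        rw [div_eq_inv_mul, le_inv_mul_iff₀ hε]; linarith [hdist N m hm]
      calc dist (u n) (u m) ≤ dist (u N) (u n) + dist (u N) (u m) := dist_triangle_left _ _ _
        _ ≤ (φ (u N) - φ (u n)) / ε + (φ (u N) - φ (u m)) / ε := add_le_add d1 d2
        _ ≤ 2 * (φ (u N) - L) / ε := by
            have := hLle n; have := hLle m
            rw [← add_div]
            gcongr
            linarith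
    · have : Tendsto (fun n => 2 * (φ (u n) - L) / ε) atTop (nhds (2 * (L - L) / ε)) := by
        exact (((htendL.sub_const L).const_mul 2).div_const ε)
      simpa using this
  obtain ⟨x, hx⟩ := cauchySeq_tendsto_of_complete hcauchy
  have hφx : Tendsto (fun n => φ (u n)) atTop (nhds (φ x)) := (hφ.tendsto x).comp hx
  have hxL : φ x = L := tendsto_nhds_unique hφx htendL
  -- x ∈ S (u n) for all n
  have hxS : ∀ n, x ∈ S (u n) := by
    intro n
    simp only [hS, Set.mem_setOf_eq]
    have h1 : Tendsto (fun m => φ (u m) + ε * dist (u n) (u m)) atTop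
        (nhds (φ x + ε * dist (u n) x)) :=
      hφx.add ((((continuous_const.dist continuous_id).tendsto x).comp hx).const_mul ε)
    exact le_of_tendsto h1 (eventually_atTop.2 ⟨n, fun m hm => by
      have := hchain n m hm; simpa [hS] using this⟩)
  refine ⟨x, ?_, ?_⟩
  · have := hxS 0
    simp only [hS, Set.mem_setOf_eq, hu0] at this
    nlinarith [mul_nonneg hε.le (dist_nonneg (x := x₀) (y := x))]
  · intro y
    by_contra hcon
    push_neg at hcon
    -- y ∈ S x strictly, hence y ∈ S (u n) for all n
    have hyS : ∀ n, y ∈ S (u n) := by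
      intro n
      apply htrans _ x _ (hxS n)
      simp only [hS, Set.mem_setOf_eq]; linarith
    have hySn : ∀ n, sInf (φ '' S (u n)) ≤ φ y := fun n => csInf_le (hbdd _) ⟨y, hyS n, rfl⟩
    have hkey : ∀ n, φ (u (n+1)) ≤ φ y + (1/2)^n := by
      intro n; rw [hus]; exact (hg2 (u n) n).trans (by linarith [hySn n])
    have h1 : Tendsto (fun n => φ y + (1/2:ℝ)^n) atTop (nhds (φ y + 0)) :=
      tendsto_const_nhds.add (tendsto_pow_atTop_nhds_zero_of_lt_one (by norm_num) (by norm_num))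
    have h2 : L ≤ φ y + 0 := le_of_tendsto_of_tendsto' (htendL.comp (tendsto_add_atTop_nat 1)) h1 hkey
    rw [← hxL] at h2
    nlinarith [mul_nonneg hε.le (dist_nonneg (x := x) (y := y))]


section PSeq

variable {V : Type*} [NormedAddCommGroup V] [NormedSpace ℝ V] [CompleteSpace V]

-- The key quantitative lemma
lemma key_quant
    (F : V → ℝ) (F' : V → V →L[ℝ] ℝ)
    (hdiff : ∀ x : V, HasFDerivAt F (F' x) x) (hcont : Continuous F')
    (h0 : F 0 = 0)
    (lam R : ℝ) (hlam : 0 < lam) (hR : 0 < R)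
    (hgeom : ∀ u : V, ‖u‖ = R → lam ≤ F u)
    (v₀ : V)
    (t₀ : ℝ) (ht₀R : R < ‖t₀ • v₀‖) (hFt₀ : F (t₀ • v₀) < 0)
    (c : ℝ)
    (hc : c = sInf { m : ℝ | ∃ γ : ℝ → V, ContinuousOn γ (Set.Icc 0 1) ∧
      γ 0 = 0 ∧ γ 1 = t₀ • v₀ ∧
      m = sSup ((fun t => F (γ t)) '' Set.Icc (0 : ℝ) 1) })
    (ε : ℝ) (hε : 0 < ε) (hεlam : ε < lam / 2) (hε1 : ε ≤ 1) :
    ∃ u : V, |F u - c| ≤ ε ∧ ‖F' u‖ ≤ 3 * ε := by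
  classical
  have hFcont : Continuous F := by
    rw [continuous_iff_continuousAt]; exact fun x => (hdiff x).continuousAt
  set E : V := t₀ • v₀ with hE
  set T : Set ℝ := { m : ℝ | ∃ γ : ℝ → V, ContinuousOn γ (Set.Icc 0 1) ∧
      γ 0 = 0 ∧ γ 1 = E ∧ m = sSup ((fun t => F (γ t)) '' Set.Icc (0 : ℝ) 1) } with hT
  -- every element of T is ≥ lam (paths cross the sphere of radius R)
  have hTlam : ∀ m ∈ T, lam ≤ m := by
    rintro m ⟨γ, hγ, hγ0, hγ1, rfl⟩
    have hnorm : ContinuousOn (fun t => ‖γ t‖) (Set.Icc 0 1) := hγ.norm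
    have hmem : R ∈ Set.Icc ‖γ 0‖ ‖γ 1‖ := by
      constructor
      · rw [hγ0]; simpa using hR.le
      · rw [hγ1]; exact ht₀R.le
    obtain ⟨t, ht, htR⟩ := intermediate_value_Icc (by norm_num : (0:ℝ) ≤ 1) hnorm hmem
    have hbdd : BddAbove ((fun t => F (γ t)) '' Set.Icc (0:ℝ) 1) :=
      (isCompact_Icc.image_of_continuousOn (hFcont.comp_continuousOn hγ)).bddAbove
    exact (hgeom (γ t) htR).trans (le_csSup hbdd ⟨t, ht, rfl⟩)
  have hTne : T.Nonempty := by
    refine ⟨_, fun t => t • E, ?_, ?_, ?_, rfl⟩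
    · exact (continuous_id.smul continuous_const).continuousOn
    · simp
    · simp
  have hTbdd : BddBelow T := ⟨lam, hTlam⟩
  have hclam : lam ≤ c := by rw [hc]; exact le_csInf hTne hTlam
  have hcpos : 0 < c := hlam.trans_le hclam
  -- the path space
  set I := Set.Icc (0:ℝ) 1 with hI
  have h0I : (0:ℝ) ∈ I := by simp [hI]
  have h1I : (1:ℝ) ∈ I := by simp [hI]
  set i0 : I := ⟨0, h0I⟩ with hi0
  set i1 : I := ⟨1, h1I⟩ with hi1
  set Γ : Set C(I, V) := {γ | γ i0 = 0 ∧ γ i1 = E} with hΓ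
  have hΓclosed : IsClosed Γ := by
    apply IsClosed.inter
    · exact isClosed_eq (continuous_eval_const i0) continuous_const
    · exact isClosed_eq (continuous_eval_const i1) continuous_const
  haveI : CompleteSpace ↥Γ := hΓclosed.completeSpace_coe
  -- the max functional
  set φ : ↥Γ → ℝ := fun γ => sSup (Set.range fun s : I => F (γ.1 s)) with hφ
  have hrangene : ∀ γ : ↥Γ, (Set.range fun s : I => F (γ.1 s)).Nonempty :=
    fun γ => ⟨_, ⟨i0, rfl⟩⟩
  have hrangecpt : ∀ γ : ↥Γ, IsCompact (Set.range fun s : I => F (γ.1 s)) :=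
    fun γ => isCompact_range (hFcont.comp γ.1.continuous)
  have hrangebdd : ∀ γ : ↥Γ, BddAbove (Set.range fun s : I => F (γ.1 s)) :=
    fun γ => (hrangecpt γ).bddAbove
  have le_φ : ∀ (γ : ↥Γ) (s : I), F (γ.1 s) ≤ φ γ :=
    fun γ s => le_csSup (hrangebdd γ) ⟨s, rfl⟩
  haveI : Nonempty ↥I := ⟨i0⟩
  have hφattain : ∀ γ : ↥Γ, ∃ s : I, φ γ = F (γ.1 s) := by
    intro γ
    obtain ⟨s, _, hs⟩ := isCompact_univ.exists_isMaxOn (Set.univ_nonempty)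
      ((hFcont.comp γ.1.continuous).continuousOn)
    refine ⟨s, IsGreatest.csSup_eq ⟨⟨s, rfl⟩, ?_⟩⟩
    rintro m ⟨s', rfl⟩
    exact hs (Set.mem_univ s')
  -- continuity of φ
  have hφcont : Continuous φ := by
    have hFc : Continuous fun γ : ↥Γ => (ContinuousMap.mk F hFcont).comp γ.1 :=
      (ContinuousMap.continuous_postcomp _).comp continuous_subtype_val
    have hL : LipschitzWith 1 (fun f : C(I, ℝ) => sSup (Set.range f)) := by
      apply LipschitzWith.of_dist_le_mul
      intro f g
      rw [NNReal.coe_one, one_mul, Real.dist_eq, abs_sub_le_iff]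
      have hb : ∀ h : C(I,ℝ), BddAbove (Set.range h) := fun h =>
        (isCompact_range h.continuous).bddAbove
      have hn : ∀ h : C(I,ℝ), (Set.range h).Nonempty := fun h => ⟨_, ⟨i0, rfl⟩⟩
      constructor
      · rw [sub_le_iff_le_add]
        apply csSup_le (hn f)
        rintro m ⟨x, rfl⟩
        have h1 : f x - g x ≤ dist f g := by
          have := ContinuousMap.dist_apply_le_dist (f := f) (g := g) x
          rw [Real.dist_eq] at this
          have := abs_le.mp this
          linarith [this.2]
        have h2 : g x ≤ sSup (Set.range g) := le_csSup (hb g) ⟨x, rfl⟩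
        linarith
      · rw [sub_le_iff_le_add]
        apply csSup_le (hn g)
        rintro m ⟨x, rfl⟩
        have h1 : g x - f x ≤ dist f g := by
          have := ContinuousMap.dist_apply_le_dist (f := f) (g := g) x
          rw [Real.dist_eq] at this
          linarith [(abs_le.mp this).1]
        have h2 : f x ≤ sSup (Set.range f) := le_csSup (hb f) ⟨x, rfl⟩
        linarith
    exact hL.continuous.comp hFc
  -- relating T and φ
  have hTmem : ∀ γ : ↥Γ, φ γ ∈ T := by
    intro γ
    refine ⟨fun t => γ.1 (Set.projIcc 0 1 (by norm_num) t), ?_, ?_, ?_, ?_⟩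
    · exact (γ.1.continuous.comp continuous_projIcc).continuousOn
    · show γ.1 (Set.projIcc 0 1 (by norm_num) 0) = 0
      rw [Set.projIcc_left]; exact γ.2.1
    · show γ.1 (Set.projIcc 0 1 (by norm_num) 1) = E
      rw [Set.projIcc_right]; exact γ.2.2
    · simp only [hφ]
      congr 1
      ext m
      constructor
      · rintro ⟨s, rfl⟩
        exact ⟨s.1, s.2, by simp [Set.projIcc_of_mem zero_le_one s.2]⟩
      · rintro ⟨t, ht, rfl⟩
        exact ⟨⟨t, ht⟩, by simp [Set.projIcc_of_mem zero_le_one ht]⟩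
  have hTrep : ∀ m ∈ T, ∃ γ : ↥Γ, φ γ = m := by
    rintro m ⟨γ, hγ, hγ0, hγ1, rfl⟩
    refine ⟨⟨⟨fun s : I => γ s, hγ.restrict⟩, hγ0, hγ1⟩, ?_⟩
    simp only [hφ]
    congr 1
    ext m
    constructor
    · rintro ⟨s, rfl⟩; exact ⟨s.1, s.2, rfl⟩
    · rintro ⟨t, ht, rfl⟩; exact ⟨⟨t, ht⟩, rfl⟩
  have hcle : ∀ γ : ↥Γ, c ≤ φ γ := fun γ => by rw [hc]; exact csInf_le hTbdd (hTmem γ)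
  -- initial path with φ γ₀ < c + ε²
  obtain ⟨m, hmT, hm⟩ : ∃ m ∈ T, m < c + ε^2 := by
    apply exists_lt_of_csInf_lt hTne
    rw [← hc]; nlinarith
  obtain ⟨γ₀, hγ₀⟩ := hTrep m hmT
  -- Ekeland
  obtain ⟨p, hp1, hp2⟩ := weak_ekeland φ hφcont c hcle ε hε γ₀
  have hple : φ p ≤ c + ε^2 := hp1.trans (by rw [hγ₀]; exact hm.le)
  -- suppose no good point exists
  by_contra hcon
  push_neg at hcon
  have hbig : ∀ s : I, c - ε ≤ F (p.1 s) → 3 * ε < ‖F' (p.1 s)‖ := by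
    intro s hs
    by_contra hb
    push_neg at hb
    refine absurd (hcon (p.1 s) ?_) (by simpa using hb)
    rw [abs_le]
    constructor
    · linarith
    · nlinarith [le_φ p s]
  obtain ⟨hq0, hq1⟩ := p.2
  -- the near-maximum set
  set M : Set ↥I := {s | c - ε ≤ F (p.1 s)} with hM
  have hMclosed : IsClosed M := isClosed_le continuous_const (hFcont.comp p.1.continuous)
  have hMne : M.Nonempty := by
    obtain ⟨s, hs⟩ := hφattain p
    refine ⟨s, ?_⟩
    simp only [hM, Set.mem_setOf_eq]
    rw [← hs]
    linarith [hcle p]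
  have hFi0 : F (p.1 i0) = 0 := by rw [hq0, h0]
  have hFi1 : F (p.1 i1) < 0 := by rw [hq1]; exact hFt₀
  -- choice of descent directions
  have hdata : ∀ t : ↥M, ∃ wr : V × ℝ, ‖wr.1‖ ≤ 1 ∧ 0 < wr.2 ∧
      ∀ y ∈ ball (p.1 t.1) (2 * wr.2), F' y wr.1 < -(2*ε) := by
    intro t
    have hn : 3 * ε < ‖F' (p.1 t.1)‖ := hbig t.1 t.2
    set x := p.1 t.1 with hx
    obtain ⟨w₀, hw₀1, hw₀2⟩ := (F' x).exists_lt_apply_of_lt_opNorm hn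
    have habs : 3 * ε < |F' x w₀| := by simpa [Real.norm_eq_abs] using hw₀2
    set w : V := if 0 ≤ F' x w₀ then -w₀ else w₀ with hw
    have hw1 : ‖w‖ ≤ 1 := by
      rw [hw]; split_ifs
      · rw [norm_neg]; linarith
      · linarith
    have hw2 : F' x w < -(3 * ε) := by
      rw [hw]; split_ifs with hsgn
      · rw [map_neg]
        rw [abs_of_nonneg hsgn] at habs
        linarith
      · push_neg at hsgn
        rw [abs_of_neg hsgn] at habs
        linarith
    have hopen : IsOpen {y : V | F' y w < -(2*ε)} :=
      isOpen_lt (hcont.clm_apply continuous_const) continuous_const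
    have hxmem : x ∈ {y : V | F' y w < -(2*ε)} := by
      simp only [Set.mem_setOf_eq]; linarith
    obtain ⟨r', hr', hball⟩ := Metric.isOpen_iff.mp hopen x hxmem
    refine ⟨(w, r'/2), hw1, by linarith, fun y hy => hball ?_⟩
    rw [show 2*(r'/2) = r' by ring] at hy
    exact hy
  choose wr hw1 hr hw2 using hdata
  set w : ↥M → V := fun t => (wr t).1 with hwdef
  set r : ↥M → ℝ := fun t => (wr t).2 with hrdef
  -- open cover of M
  set U : ↥M → Set ↥I := fun t =>
    {s | p.1 s ∈ ball (p.1 t.1) (r t)} ∩ {s | c - 2*ε < F (p.1 s)} with hU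
  have hUopen : ∀ t, IsOpen (U t) := fun t =>
    ((isOpen_ball).preimage p.1.continuous).inter
      (isOpen_lt continuous_const (hFcont.comp p.1.continuous))
  have hc2ε : 0 < c - 2*ε := by linarith
  have hUsub : ∀ t : ↥M, t.1 ∈ U t := by
    intro t
    constructor
    · simp only [Set.mem_setOf_eq, mem_ball, dist_self]; exact hr t
    · have := t.2
      simp only [hM, Set.mem_setOf_eq] at this ⊢
      linarith
  have hMcov : M ⊆ ⋃ t : ↥M, U t := fun s hs => Set.mem_iUnion.2 ⟨⟨s, hs⟩, hUsub ⟨s, hs⟩⟩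
  obtain ⟨sf, hsf⟩ := (hMclosed.isCompact).elim_finite_subcover U hUopen hMcov
  have hsfne : sf.Nonempty := by
    obtain ⟨sm, hsm⟩ := hMne
    obtain ⟨t, ht, _⟩ := Set.mem_iUnion₂.mp (hsf hsm)
    exact ⟨t, ht⟩
  have hi0U : ∀ t, i0 ∉ U t := by
    intro t ht
    have := ht.2
    simp only [Set.mem_setOf_eq] at this
    rw [hFi0] at this
    linarith
  have hi1U : ∀ t, i1 ∉ U t := by
    intro t ht
    have := ht.2
    simp only [Set.mem_setOf_eq] at this
    linarith
  -- partition of unity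
  set d : ↥M → ↥I → ℝ := fun t x => infDist x (U t)ᶜ with hd
  have hdcont : ∀ t, Continuous (d t) := fun t => continuous_infDist_pt _
  have hdnn : ∀ t x, 0 ≤ d t x := fun t x => infDist_nonneg
  have hdpos : ∀ t x, x ∈ U t → 0 < d t x := by
    intro t x hx
    refine (IsClosed.notMem_iff_infDist_pos (hUopen t).isClosed_compl ⟨i0, hi0U t⟩).mp ?_
    simpa using hx
  have hdzero : ∀ t x, x ∉ U t → d t x = 0 := fun t x hx => infDist_zero_of_mem (by simpa using hx)
  set D : ↥I → ℝ := fun x => (∑ t ∈ sf, d t x) + infDist x M with hD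
  have hDcont : Continuous D :=
    (continuous_finset_sum _ fun t _ => hdcont t).add (continuous_infDist_pt _)
  have hDpos : ∀ x, 0 < D x := by
    intro x
    by_cases hx : x ∈ M
    · obtain ⟨t, ht, hxt⟩ := Set.mem_iUnion₂.mp (hsf hx)
      have h1 : 0 < ∑ t ∈ sf, d t x :=
        Finset.sum_pos' (fun t _ => hdnn t x) ⟨t, ht, hdpos t x hxt⟩
      have h2 : (0:ℝ) ≤ infDist x M := infDist_nonneg
      simp only [hD]; linarith
    · have h1 : 0 < infDist x M := (IsClosed.notMem_iff_infDist_pos hMclosed hMne).mp hx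
      have h2 : 0 ≤ ∑ t ∈ sf, d t x := Finset.sum_nonneg fun t _ => hdnn t x
      simp only [hD]; linarith
  set ρ : ↥M → ↥I → ℝ := fun t x => d t x / D x with hρdef
  have hρnn : ∀ t x, 0 ≤ ρ t x := fun t x => div_nonneg (hdnn t x) (hDpos x).le
  have hρcont : ∀ t, Continuous (ρ t) := fun t => (hdcont t).div hDcont fun x => (hDpos x).ne'
  have hρsum_le : ∀ x, ∑ t ∈ sf, ρ t x ≤ 1 := by
    intro x
    rw [show ∑ t ∈ sf, ρ t x = (∑ t ∈ sf, d t x) / D x from (Finset.sum_div _ _ _).symm]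
    rw [div_le_one (hDpos x)]
    have : (0:ℝ) ≤ infDist x M := infDist_nonneg
    simp only [hD]; linarith
  have hρsupp : ∀ t x, ρ t x ≠ 0 → x ∈ U t := by
    intro t x hne
    by_contra hx
    exact hne (by simp only [hρdef]; rw [hdzero t x hx, zero_div])
  have hρsumM : ∀ x ∈ M, ∑ t ∈ sf, ρ t x = 1 := by
    intro x hx
    have h0' : infDist x M = 0 := infDist_zero_of_mem hx
    rw [show ∑ t ∈ sf, ρ t x = (∑ t ∈ sf, d t x) / D x from (Finset.sum_div _ _ _).symm]
    rw [div_eq_one_iff_eq (hDpos x).ne']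
    simp only [hD, h0', add_zero]
  -- the vector field
  set v : ↥I → V := fun x => ∑ t ∈ sf, ρ t x • w t with hv
  have hvcont : Continuous v := continuous_finset_sum _ fun t _ => (hρcont t).smul continuous_const
  have hvnorm : ∀ x, ‖v x‖ ≤ 1 := by
    intro x
    calc ‖∑ t ∈ sf, ρ t x • w t‖ ≤ ∑ t ∈ sf, ‖ρ t x • w t‖ := norm_sum_le _ _
      _ ≤ ∑ t ∈ sf, ρ t x := Finset.sum_le_sum fun t _ => by
          rw [norm_smul, Real.norm_eq_abs, abs_of_nonneg (hρnn t x)]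
          exact mul_le_of_le_one_right (hρnn t x) (hw1 t)
      _ ≤ 1 := hρsum_le x
  have hvi0 : v i0 = 0 := by
    simp only [hv]
    apply Finset.sum_eq_zero
    intro t _
    rcases eq_or_ne (ρ t i0) 0 with hz|hz
    · rw [hz, zero_smul]
    · exact absurd (hρsupp t i0 hz) (hi0U t)
  have hvi1 : v i1 = 0 := by
    simp only [hv]
    apply Finset.sum_eq_zero
    intro t _
    rcases eq_or_ne (ρ t i1) 0 with hz|hz
    · rw [hz, zero_smul]
    · exact absurd (hρsupp t i1 hz) (hi1U t)
  -- uniform bound on ‖F'‖ near the path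
  have hKcpt : IsCompact (Set.range p.1) := isCompact_range p.1.continuous
  obtain ⟨xm, _, hxm⟩ := hKcpt.exists_isMaxOn ⟨p.1 i0, Set.mem_range_self _⟩
    hcont.norm.continuousOn
  set K := ‖F' xm‖ with hK
  have hKnn : 0 ≤ K := norm_nonneg _
  have hOK : IsOpen {y : V | ‖F' y‖ < K + 1} := isOpen_lt hcont.norm continuous_const
  have hsubK : Set.range p.1 ⊆ {y : V | ‖F' y‖ < K+1} := by
    intro y hy
    have := hxm hy
    simp only [Set.mem_setOf_eq]
    exact lt_of_le_of_lt this (by linarith)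
  obtain ⟨δ₀, hδ₀, hthick⟩ := hKcpt.exists_thickening_subset_open hOK hsubK
  -- step size
  set hstep : ℝ := min (δ₀/2) (min (ε / (2*(K+1+ε))) (sf.inf' hsfne r)) with hhs
  have hhpos : 0 < hstep := by
    rw [hhs]
    refine lt_min (by linarith) (lt_min (by positivity) ?_)
    exact (Finset.lt_inf'_iff hsfne).mpr fun t _ => hr t
  have hhr : ∀ t ∈ sf, hstep ≤ r t := fun t ht =>
    ((min_le_right _ _).trans (min_le_right _ _)).trans (Finset.inf'_le r ht)
  have hhδ : hstep < δ₀ := lt_of_le_of_lt (min_le_left _ _) (by linarith)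
  have hhε : hstep ≤ ε / (2*(K+1+ε)) := (min_le_right _ _).trans (min_le_left _ _)
  -- perturbed path
  set η : C(↥I, V) := ⟨fun x => p.1 x + hstep • v x,
    p.1.continuous.add (continuous_const.smul hvcont)⟩ with hη
  have hηΓ : η ∈ Γ := by
    constructor
    · show p.1 i0 + hstep • v i0 = 0
      rw [hvi0, hq0, smul_zero, add_zero]
    · show p.1 i1 + hstep • v i1 = E
      rw [hvi1, hq1, smul_zero, add_zero]
  set q : ↥Γ := ⟨η, hηΓ⟩ with hqdef
  have hdistpq : dist p q ≤ hstep := by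
    rw [Subtype.dist_eq]
    rw [ContinuousMap.dist_le hhpos.le]
    intro x
    have : dist (p.1 x) (η x) = ‖hstep • v x‖ := by
      rw [dist_eq_norm]
      show ‖p.1 x - (p.1 x + hstep • v x)‖ = _
      rw [sub_add_cancel_left, norm_neg]
    rw [this, norm_smul, Real.norm_eq_abs, abs_of_nonneg hhpos.le]
    exact mul_le_of_le_one_right hhpos.le (hvnorm x)
  -- pointwise estimate
  have hpt : ∀ x : ↥I, F (η x) ≤ max (φ p - 2*ε*hstep) (c - ε + (K+1)*hstep) := by
    intro x
    set wv : V := hstep • v x with hwv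
    have hwvn : ‖wv‖ ≤ hstep := by
      rw [hwv, norm_smul, Real.norm_eq_abs, abs_of_nonneg hhpos.le]
      exact mul_le_of_le_one_right hhpos.le (hvnorm x)
    have hg' : ∀ θ : ℝ, HasDerivAt (fun θ : ℝ => F (p.1 x + θ • wv))
        (F' (p.1 x + θ • wv) wv) θ := by
      intro θ
      have hψ : HasDerivAt (fun θ : ℝ => p.1 x + θ • wv) wv θ := by
        simpa using ((hasDerivAt_id θ).smul_const wv).const_add (p.1 x)
      exact (hdiff _).comp_hasDerivAt θ hψ
    obtain ⟨θ, hθ, hslope⟩ := exists_hasDerivAt_eq_slope (fun θ : ℝ => F (p.1 x + θ • wv))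
      (fun θ => F' (p.1 x + θ • wv) wv) zero_lt_one
      (fun θ _ => (hg' θ).continuousAt.continuousWithinAt)
      (fun θ _ => hg' θ)
    simp only [one_smul, zero_smul, add_zero, sub_zero, div_one] at hslope
    have hηx : F (η x) = F (p.1 x + wv) := rfl
    set y : V := p.1 x + θ • wv with hy
    have hyd : dist y (p.1 x) ≤ hstep := by
      rw [hy, dist_eq_norm]
      rw [show p.1 x + θ • wv - p.1 x = θ • wv by abel]
      rw [norm_smul, Real.norm_eq_abs, abs_of_nonneg hθ.1.le]
      calc θ * ‖wv‖ ≤ 1 * ‖wv‖ :=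
            mul_le_mul_of_nonneg_right hθ.2.le (norm_nonneg _)
        _ = ‖wv‖ := one_mul _
        _ ≤ hstep := hwvn
    by_cases hxM : x ∈ M
    · -- descent estimate
      have hsum : F' y wv = ∑ t ∈ sf, (hstep * ρ t x) * (F' y (w t)) := by
        rw [hwv]
        show F' y (hstep • ∑ t ∈ sf, ρ t x • w t) = _
        rw [Finset.smul_sum, map_sum]
        refine Finset.sum_congr rfl fun t _ => ?_
        rw [smul_smul, map_smul, smul_eq_mul]
      have hterm : ∀ t ∈ sf, (hstep * ρ t x) * (F' y (w t)) ≤ (hstep * ρ t x) * (-(2*ε)) := by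
        intro t ht
        rcases eq_or_ne (ρ t x) 0 with hz|hz
        · rw [hz, mul_zero, zero_mul, zero_mul]
        · have hxU := hρsupp t x hz
          have hyb : y ∈ ball (p.1 t.1) (2 * r t) := by
            have h1 : dist (p.1 x) (p.1 t.1) < r t := hxU.1
            have h2 := dist_triangle y (p.1 x) (p.1 t.1)
            have h3 := hhr t ht
            rw [mem_ball]
            linarith
          exact mul_le_mul_of_nonneg_left (hw2 t y hyb).le
            (mul_nonneg hhpos.le (hρnn t x))
      have hsum2 : F' y wv ≤ -(2*ε*hstep) := by
        rw [hsum]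
        calc ∑ t ∈ sf, (hstep * ρ t x) * (F' y (w t))
            ≤ ∑ t ∈ sf, (hstep * ρ t x) * (-(2*ε)) := Finset.sum_le_sum hterm
          _ = (-(2*ε*hstep)) * ∑ t ∈ sf, ρ t x := by
              rw [Finset.mul_sum]
              exact Finset.sum_congr rfl fun t _ => by ring
          _ = -(2*ε*hstep) := by rw [hρsumM x hxM, mul_one]
      refine le_max_of_le_left ?_
      rw [hηx]
      have h5 := le_φ p x
      have h6 : F (p.1 x + wv) = F (p.1 x) + F' y wv := by rw [hslope]; ring
      rw [h6]
      linarith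
    · -- away from the max set
      have hFx : F (p.1 x) < c - ε := by
        simp only [hM, Set.mem_setOf_eq] at hxM
        linarith [lt_of_not_ge hxM]
      have hyT : y ∈ thickening δ₀ (Set.range p.1) := by
        rw [mem_thickening_iff]
        exact ⟨p.1 x, Set.mem_range_self x, lt_of_le_of_lt hyd hhδ⟩
      have hKy : ‖F' y‖ ≤ K + 1 := (hthick hyT).le
      have hFyb : F' y wv ≤ (K+1) * hstep := by
        calc F' y wv ≤ |F' y wv| := le_abs_self _
          _ = ‖F' y wv‖ := (Real.norm_eq_abs _).symm
          _ ≤ ‖F' y‖ * ‖wv‖ := (F' y).le_opNorm wv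
          _ ≤ (K+1) * hstep := mul_le_mul hKy hwvn (norm_nonneg _) (by linarith)
      refine le_max_of_le_right ?_
      rw [hηx]
      have h6 : F (p.1 x + wv) = F (p.1 x) + F' y wv := by rw [hslope]; ring
      rw [h6]
      linarith
  -- contradiction via Ekeland
  have hφq : φ q ≤ max (φ p - 2*ε*hstep) (c - ε + (K+1)*hstep) := by
    apply csSup_le (hrangene q)
    rintro m ⟨x, rfl⟩
    exact hpt x
  have hek := hp2 q
  have hdq : ε * dist p q ≤ ε * hstep := mul_le_mul_of_nonneg_left hdistpq hε.le
  rcases le_total (φ p - 2*ε*hstep) (c - ε + (K+1)*hstep) with hmx|hmx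
  · rw [max_eq_right hmx] at hφq
    have h1 : c ≤ φ p := hcle p
    have h4 : (K+1)*hstep + ε*hstep ≤ ε/2 := by
      have hpos : (0:ℝ) < 2*(K+1+ε) := by positivity
      have := mul_le_mul_of_nonneg_left hhε (le_of_lt (by positivity : (0:ℝ) < K+1+ε))
      calc (K+1)*hstep + ε*hstep = (K+1+ε)*hstep := by ring
        _ ≤ (K+1+ε)*(ε / (2*(K+1+ε))) := this
        _ = ε/2 := by field_simp
    linarith
  · rw [max_eq_left hmx] at hφq
    have hph : 0 < ε * hstep := mul_pos hε hhpos
    linarith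


end PSeq

end Aux

noncomputable section

/-- Mountain-pass theorem: existence of a Palais–Smale sequence at the
mountain-pass level. -/
theorem mountain_pass_PS_sequence {V : Type*} [NormedAddCommGroup V]
    [NormedSpace ℝ V] [CompleteSpace V]
    (F : V → ℝ) (F' : V → V →L[ℝ] ℝ)
    (hdiff : ∀ x : V, HasFDerivAt F (F' x) x) (hcont : Continuous F')
    (h0 : F 0 = 0)
    (lam R : ℝ) (hlam : 0 < lam) (hR : 0 < R)
    (hgeom : ∀ u : V, ‖u‖ = R → lam ≤ F u)
    (v₀ : V) (hliminf : Filter.liminf (fun t : ℝ => F (t • v₀)) atTop < 0)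
    (t₀ : ℝ) (ht₀ : 0 < t₀) (ht₀R : R < ‖t₀ • v₀‖) (hFt₀ : F (t₀ • v₀) < 0)
    (c : ℝ)
    (hc : c = sInf { m : ℝ | ∃ γ : ℝ → V, ContinuousOn γ (Set.Icc 0 1) ∧
      γ 0 = 0 ∧ γ 1 = t₀ • v₀ ∧
      m = sSup ((fun t => F (γ t)) '' Set.Icc (0 : ℝ) 1) }) :
    ∃ u : ℕ → V, Tendsto (fun n => F (u n)) atTop (nhds c) ∧
      Tendsto (fun n => ‖F' (u n)‖) atTop (nhds 0) := by
  set e : ℕ → ℝ := fun n => min (lam/4) 1 / (n+1) with he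
  have hmpos : 0 < min (lam/4) 1 := lt_min (by linarith) one_pos
  have hepos : ∀ n, 0 < e n := fun n => div_pos hmpos (by positivity)
  have hele : ∀ n, e n ≤ min (lam/4) 1 := fun n =>
    div_le_self hmpos.le (by exact_mod_cast Nat.succ_le_succ (Nat.zero_le n))
  have helam : ∀ n, e n < lam / 2 := fun n =>
    lt_of_le_of_lt ((hele n).trans (min_le_left _ _)) (by linarith)
  have he1 : ∀ n, e n ≤ 1 := fun n => (hele n).trans (min_le_right _ _)
  have hkey : ∀ n : ℕ, ∃ u : V, |F u - c| ≤ e n ∧ ‖F' u‖ ≤ 3 * e n := fun n =>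
    key_quant F F' hdiff hcont h0 lam R hlam hR hgeom v₀ t₀ ht₀R hFt₀ c hc
      (e n) (hepos n) (helam n) (he1 n)
  choose u hu1 hu2 using hkey
  have hetend : Tendsto e atTop (nhds 0) := by
    have h1 : Tendsto (fun n : ℕ => (n:ℝ) + 1) atTop atTop :=
      tendsto_atTop_add_const_right _ 1 tendsto_natCast_atTop_atTop
    have := h1.inv_tendsto_atTop
    have h2 : Tendsto (fun n : ℕ => min (lam/4) 1 * ((n:ℝ)+1)⁻¹) atTop
        (nhds (min (lam/4) 1 * 0)) := this.const_mul _
    simpa [he, div_eq_mul_inv] using h2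
  refine ⟨u, ?_, ?_⟩
  · rw [tendsto_iff_dist_tendsto_zero]
    apply squeeze_zero (fun n => dist_nonneg) (fun n => ?_) hetend
    rw [Real.dist_eq]
    exact hu1 n
  · apply squeeze_zero (fun n => norm_nonneg _) (fun n => hu2 n)
    simpa using hetend.const_mul (3:ℝ)

end
end

section
/- Let N be a positive integer, 0 < s < 1, 1 < p < ∞ with N > sp, let η ∈ C_0^∞(ℝ^N), and set D^s(η^p)(y) = ∫_{ℝ^N} |η(x)^p − η(y)^p|^p / |x−y|^{N+sp} dx. Let {u_n} be a sequence of measurable functions on ℝ^N such that sup_n ∫_{ℝ^N} |u_n|^{p_s^*} dx < ∞ (with p_s^* = Np/(N−sp)) and ∫_{B_R(0)} |u_n|^p dx → 0 as n → ∞ for every R > 0. Then ∫_{ℝ^N} |u_n(y)|^p |D^s(η^p)(y)| dy → 0 as n → ∞. -/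
open MeasureTheory Filter

noncomputable section

abbrev Rn (N : ℕ) := EuclideanSpace ℝ (Fin N)

lemma Rn.nontrivial (N : ℕ) (hN : 0 < N) : Nontrivial (Rn N) := by
  refine ⟨0, EuclideanSpace.single ⟨0, hN⟩ 1, fun h => ?_⟩
  have := congrArg (fun v : Rn N => v ⟨0, hN⟩) h
  simp [EuclideanSpace.single_apply] at this

/-- integrability of `‖z‖ ^ (-a)` near the origin, `a < N`. -/
lemma lint_ball_rpow (N : ℕ) (hN : 0 < N) {a : ℝ} (ha : a < N) :
    ∫⁻ z : Rn N in Metric.ball 0 1, ENNReal.ofReal (‖z‖ ^ (-a)) < ⊤ := by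
  haveI := Rn.nontrivial N hN
  rcases le_or_gt a 0 with ha0 | ha0
  · calc ∫⁻ z : Rn N in Metric.ball 0 1, ENNReal.ofReal (‖z‖ ^ (-a))
        ≤ ∫⁻ _ : Rn N in Metric.ball 0 1, 1 := by
          refine setLIntegral_mono' measurableSet_ball fun z hz => ?_
          rw [Metric.mem_ball, dist_zero_right] at hz
          have : ‖z‖ ^ (-a) ≤ 1 :=
            Real.rpow_le_one (norm_nonneg z) hz.le (neg_nonneg.2 ha0)
          calc ENNReal.ofReal (‖z‖ ^ (-a)) ≤ ENNReal.ofReal 1 :=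
                ENNReal.ofReal_le_ofReal this
            _ = 1 := ENNReal.ofReal_one
      _ = volume (Metric.ball (0 : Rn N) 1) := by simp
      _ < ⊤ := measure_ball_lt_top
  · -- annuli decomposition
    set A : ℕ → Set (Rn N) := fun k =>
      Metric.ball 0 ((2:ℝ) ^ (-(k:ℝ))) \ Metric.ball 0 ((2:ℝ) ^ (-((k:ℝ)+1))) with hA
    have hcover : Metric.ball (0 : Rn N) 1 ⊆ {0} ∪ ⋃ k, A k := by
      intro x hx
      rcases eq_or_ne x 0 with rfl | hx0
      · exact Set.mem_union_left _ rfl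
      right
      rw [Metric.mem_ball, dist_zero_right] at hx
      have hx0' : 0 < ‖x‖ := norm_pos_iff.2 hx0
      have hS : ∃ k : ℕ, (2:ℝ) ^ (-((k:ℝ)+1)) ≤ ‖x‖ := by
        obtain ⟨n, hn⟩ := exists_pow_lt_of_lt_one hx0' (by norm_num : (1:ℝ)/2 < 1)
        refine ⟨n, le_of_lt ?_⟩
        calc (2:ℝ) ^ (-((n:ℝ)+1)) ≤ (2:ℝ) ^ (-(n:ℝ)) := by
              apply Real.rpow_le_rpow_of_exponent_le one_le_two; linarith
          _ = ((1:ℝ)/2) ^ n := by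
              rw [Real.rpow_neg (by norm_num), Real.rpow_natCast]
              simp [one_div, inv_pow]
          _ < ‖x‖ := hn
      classical
      set k := Nat.find hS with hk
      have hk1 : (2:ℝ) ^ (-((k:ℝ)+1)) ≤ ‖x‖ := Nat.find_spec hS
      have hk2 : ‖x‖ < (2:ℝ) ^ (-(k:ℝ)) := by
        rcases Nat.eq_zero_or_pos k with hk0 | hk0
        · rw [hk0]; simpa using hx
        · have hjk : k - 1 < k := Nat.sub_lt hk0 one_pos
          have := Nat.find_min hS hjk
          push_neg at this
          have hcast : ((k - 1 : ℕ) : ℝ) + 1 = (k : ℝ) := by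
            have : (1:ℕ) ≤ k := hk0
            push_cast [Nat.cast_sub this]
            ring
          rw [hcast] at this
          exact this
      exact Set.mem_iUnion.2 ⟨k, by
        simp only [hA, Set.mem_diff, Metric.mem_ball, dist_zero_right, not_lt]
        exact ⟨hk2, hk1⟩⟩
    calc ∫⁻ z : Rn N in Metric.ball 0 1, ENNReal.ofReal (‖z‖ ^ (-a))
        ≤ ∫⁻ z : Rn N in {0} ∪ ⋃ k, A k, ENNReal.ofReal (‖z‖ ^ (-a)) :=
          lintegral_mono_set hcover
      _ ≤ (∫⁻ z : Rn N in {0}, ENNReal.ofReal (‖z‖ ^ (-a)))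
            + ∫⁻ z : Rn N in ⋃ k, A k, ENNReal.ofReal (‖z‖ ^ (-a)) :=
          lintegral_union_le _ _ _
      _ ≤ 0 + ∑' k, ∫⁻ z : Rn N in A k, ENNReal.ofReal (‖z‖ ^ (-a)) := by
          gcongr
          · have h0 : volume ({0} : Set (Rn N)) = 0 := measure_singleton 0
            rw [setLIntegral_measure_zero _ _ h0]
          · exact lintegral_iUnion_le _ _
      _ = ∑' k, ∫⁻ z : Rn N in A k, ENNReal.ofReal (‖z‖ ^ (-a)) := by rw [zero_add]
      _ ≤ ∑' k, (ENNReal.ofReal ((2:ℝ) ^ a) * ENNReal.ofReal ((2:ℝ) ^ (a - N)) ^ k)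
            * volume (Metric.ball (0 : Rn N) 1) := by
          gcongr with k
          have hterm : ∫⁻ z : Rn N in A k, ENNReal.ofReal (‖z‖ ^ (-a))
              ≤ ENNReal.ofReal (((2:ℝ) ^ (-((k:ℝ)+1))) ^ (-a)) * volume (A k) := by
            have hmono : ∀ z ∈ A k, ENNReal.ofReal (‖z‖ ^ (-a))
                ≤ ENNReal.ofReal (((2:ℝ) ^ (-((k:ℝ)+1))) ^ (-a)) := by
              intro z hz
              refine ENNReal.ofReal_le_ofReal ?_
              have hzl : (2:ℝ) ^ (-((k:ℝ)+1)) ≤ ‖z‖ := by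
                have := hz.2
                rw [Metric.mem_ball, dist_zero_right, not_lt] at this
                exact this
              exact Real.rpow_le_rpow_of_nonpos
                (Real.rpow_pos_of_pos two_pos _) hzl (neg_nonpos.2 ha0.le)
            calc ∫⁻ z : Rn N in A k, ENNReal.ofReal (‖z‖ ^ (-a))
                ≤ ∫⁻ _ : Rn N in A k,
                    ENNReal.ofReal (((2:ℝ) ^ (-((k:ℝ)+1))) ^ (-a)) :=
                  setLIntegral_mono' ((measurableSet_ball).diff measurableSet_ball) hmono
              _ = ENNReal.ofReal (((2:ℝ) ^ (-((k:ℝ)+1))) ^ (-a)) * volume (A k) :=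
                  setLIntegral_const _ _
          refine hterm.trans ?_
          have hvol : volume (A k) ≤
              ENNReal.ofReal (((2:ℝ) ^ (-(k:ℝ))) ^ (N : ℕ)) * volume (Metric.ball (0 : Rn N) 1) := by
            calc volume (A k) ≤ volume (Metric.ball (0:Rn N) ((2:ℝ) ^ (-(k:ℝ)))) :=
                  measure_mono Set.diff_subset
              _ = ENNReal.ofReal (((2:ℝ) ^ (-(k:ℝ))) ^ Module.finrank ℝ (Rn N))
                    * volume (Metric.ball (0 : Rn N) 1) :=
                  Measure.addHaar_ball _ _ (Real.rpow_nonneg (by norm_num) _)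
              _ = ENNReal.ofReal (((2:ℝ) ^ (-(k:ℝ))) ^ (N:ℕ))
                    * volume (Metric.ball (0 : Rn N) 1) := by
                  rw [finrank_euclideanSpace_fin]
          calc ENNReal.ofReal (((2:ℝ) ^ (-((k:ℝ)+1))) ^ (-a)) * volume (A k)
              ≤ ENNReal.ofReal (((2:ℝ) ^ (-((k:ℝ)+1))) ^ (-a)) *
                  (ENNReal.ofReal (((2:ℝ) ^ (-(k:ℝ))) ^ (N : ℕ)) *
                    volume (Metric.ball (0 : Rn N) 1)) := by gcongr
            _ = (ENNReal.ofReal (((2:ℝ) ^ (-((k:ℝ)+1))) ^ (-a) * ((2:ℝ) ^ (-(k:ℝ))) ^ (N:ℕ)))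
                  * volume (Metric.ball (0 : Rn N) 1) := by
                rw [← mul_assoc, ← ENNReal.ofReal_mul
                  (Real.rpow_nonneg (Real.rpow_nonneg (by norm_num) _) _)]
            _ = (ENNReal.ofReal ((2:ℝ) ^ a) * ENNReal.ofReal ((2:ℝ) ^ (a - N)) ^ k)
                  * volume (Metric.ball (0 : Rn N) 1) := by
                congr 1
                have key : ((2:ℝ) ^ (-((k:ℝ)+1))) ^ (-a) * ((2:ℝ) ^ (-(k:ℝ))) ^ (N:ℕ)
                    = (2:ℝ) ^ a * ((2:ℝ) ^ (a - N)) ^ k := by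
                  rw [← Real.rpow_natCast ((2:ℝ) ^ (-(k:ℝ))) N,
                    ← Real.rpow_natCast ((2:ℝ) ^ (a - N)) k,
                    ← Real.rpow_mul (by norm_num : (0:ℝ) ≤ 2),
                    ← Real.rpow_mul (by norm_num : (0:ℝ) ≤ 2),
                    ← Real.rpow_mul (by norm_num : (0:ℝ) ≤ 2),
                    ← Real.rpow_add two_pos, ← Real.rpow_add two_pos]
                  ring_nf
                rw [key, ENNReal.ofReal_mul (Real.rpow_nonneg (by norm_num) _),
                  ENNReal.ofReal_pow (Real.rpow_nonneg (by norm_num) _)]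
      _ = ENNReal.ofReal ((2:ℝ) ^ a) * ((∑' k, ENNReal.ofReal ((2:ℝ) ^ (a - N)) ^ k)
            * volume (Metric.ball (0 : Rn N) 1)) := by
          simp_rw [mul_assoc]
          rw [ENNReal.tsum_mul_left, ENNReal.tsum_mul_right]
      _ < ⊤ := by
          refine ENNReal.mul_lt_top ENNReal.ofReal_lt_top
            (ENNReal.mul_lt_top ?_ measure_ball_lt_top)
          rw [ENNReal.tsum_geometric]
          refine ENNReal.inv_lt_top.2 ?_
          rw [tsub_pos_iff_lt]
          exact ENNReal.ofReal_lt_one.2 (Real.rpow_lt_one_of_one_lt_of_neg one_lt_two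
            (by linarith))

/-- integrability of `‖z‖ ^ (-b)` away from the origin, `b > N`. -/
lemma lint_compl_rpow (N : ℕ) (hN : 0 < N) {b : ℝ} (hb : (N:ℝ) < b) :
    ∫⁻ z : Rn N in (Metric.ball 0 1)ᶜ, ENNReal.ofReal (‖z‖ ^ (-b)) < ⊤ := by
  have hb0 : 0 < b := lt_of_le_of_lt (Nat.cast_nonneg N) hb
  calc ∫⁻ z : Rn N in (Metric.ball 0 1)ᶜ, ENNReal.ofReal (‖z‖ ^ (-b))
      ≤ ∫⁻ z : Rn N in (Metric.ball 0 1)ᶜ,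
          ENNReal.ofReal ((2:ℝ)^b) * ENNReal.ofReal ((1 + ‖z‖) ^ (-b)) := by
        refine setLIntegral_mono' measurableSet_ball.compl fun z hz => ?_
        rw [Set.mem_compl_iff, Metric.mem_ball, dist_zero_right, not_lt] at hz
        rw [← ENNReal.ofReal_mul (Real.rpow_nonneg (by norm_num) _)]
        refine ENNReal.ofReal_le_ofReal ?_
        have h1 : 0 < ‖z‖ := lt_of_lt_of_le one_pos hz
        have h2b : (0:ℝ) < (2:ℝ) ^ b := Real.rpow_pos_of_pos two_pos b
        have hz1 : (0:ℝ) < ‖z‖ ^ b := Real.rpow_pos_of_pos h1 b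
        have hy1 : (0:ℝ) < (1 + ‖z‖) ^ b := Real.rpow_pos_of_pos (by positivity) b
        have h3 : (1 + ‖z‖) ^ b ≤ (2:ℝ) ^ b * ‖z‖ ^ b := by
          rw [← Real.mul_rpow (by norm_num) (norm_nonneg z)]
          exact Real.rpow_le_rpow (by positivity) (by linarith) hb0.le
        rw [Real.rpow_neg (norm_nonneg z), Real.rpow_neg (by positivity)]
        calc (‖z‖ ^ b)⁻¹ = (2:ℝ)^b * ((2:ℝ)^b * ‖z‖ ^ b)⁻¹ := by
              rw [mul_inv, ← mul_assoc, mul_inv_cancel₀ h2b.ne', one_mul]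
          _ ≤ (2:ℝ)^b * ((1 + ‖z‖) ^ b)⁻¹ := by
              refine mul_le_mul_of_nonneg_left ?_ h2b.le
              rw [inv_eq_one_div, inv_eq_one_div]
              exact one_div_le_one_div_of_le hy1 h3
      _ ≤ ENNReal.ofReal ((2:ℝ)^b) * ∫⁻ z : Rn N, ENNReal.ofReal ((1 + ‖z‖) ^ (-b)) := by
          rw [lintegral_const_mul' _ _ ENNReal.ofReal_ne_top]
          gcongr
          exact Measure.restrict_le_self
      _ < ⊤ := by
          refine ENNReal.mul_lt_top ENNReal.ofReal_lt_top ?_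
          have := finite_integral_one_add_norm (E := Rn N) (μ := volume) (r := b)
            (by rw [finrank_euclideanSpace_fin]; exact hb)
          exact this

lemma rpow_abs_sub_le {p A : ℝ} (hp : 1 ≤ p) {a b : ℝ}
    (ha : |a| ≤ A) (hb : |b| ≤ A) : |a ^ p - b ^ p| ≤ p * A ^ (p - 1) * |a - b| := by
  have hA : 0 ≤ A := le_trans (abs_nonneg a) ha
  have hC : ∀ x ∈ Set.Icc (-A) A, ‖p * x ^ (p - 1)‖ ≤ p * A ^ (p - 1) := by
    intro x hx
    have hx' : |x| ≤ A := abs_le.2 ⟨hx.1, hx.2⟩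
    rw [norm_mul, Real.norm_eq_abs, Real.norm_eq_abs,
      abs_of_nonneg (by linarith : (0:ℝ) ≤ p)]
    refine mul_le_mul_of_nonneg_left ?_ (by linarith)
    calc |x ^ (p - 1)| ≤ |x| ^ (p - 1) := Real.abs_rpow_le_abs_rpow x (p - 1)
      _ ≤ A ^ (p - 1) := Real.rpow_le_rpow (abs_nonneg x) hx' (by linarith)
  have hderiv : ∀ x ∈ Set.Icc (-A) A,
      HasDerivWithinAt (fun t : ℝ => t ^ p) (p * x ^ (p - 1)) (Set.Icc (-A) A) x :=
    fun x _ => (Real.hasDerivAt_rpow_const (Or.inr hp)).hasDerivWithinAt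
  have := Convex.norm_image_sub_le_of_norm_hasDerivWithin_le hderiv hC
    (convex_Icc _ _) (Set.mem_Icc.2 (abs_le.1 hb)) (Set.mem_Icc.2 (abs_le.1 ha))
  simpa [Real.norm_eq_abs] using this

def pStar (N : ℕ) (s p α : ℝ) : ℝ := p * ((N : ℝ) - α) / ((N : ℝ) - s * p)

def gagE (N : ℕ) (s p : ℝ) (u : Rn N → ℝ) : ENNReal :=
  ∫⁻ x : Rn N, ∫⁻ y : Rn N,
    ENNReal.ofReal (|u x - u y| ^ p / ‖x - y‖ ^ ((N : ℝ) + s * p))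

set_option maxHeartbeats 2000000 in
/-- If `u_n` is bounded in `L^{p_s^*}` and tends to `0` in `L^p_loc`, then
`∫ |u_n|^p D^s(η^p) dy → 0`. -/
theorem weighted_Ds_eta_tendsto_zero (N : ℕ) (hN : 0 < N) (s p : ℝ)
    (hs0 : 0 < s) (hs1 : s < 1) (hp : 1 < p) (hNsp : s * p < (N : ℝ))
    (η : Rn N → ℝ) (hsm : ContDiff ℝ (⊤ : ℕ∞) η) (hsupp : HasCompactSupport η)
    (u : ℕ → Rn N → ℝ) (hu : ∀ n, Measurable (u n))
    (hbd : ∃ C : ENNReal, C < ⊤ ∧ ∀ n : ℕ,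
      (∫⁻ x : Rn N, ENNReal.ofReal (|u n x| ^ (pStar N s p 0))) ≤ C)
    (hloc : ∀ R : ℝ, 0 < R →
      Tendsto (fun n => ∫⁻ x in Metric.ball (0 : Rn N) R,
        ENNReal.ofReal (|u n x| ^ p)) atTop (nhds 0)) :
    Tendsto (fun n => ∫⁻ y : Rn N, ENNReal.ofReal (|u n y| ^ p) *
        ∫⁻ x : Rn N, ENNReal.ofReal
          (|η x ^ p - η y ^ p| ^ p / ‖x - y‖ ^ ((N : ℝ) + s * p)))
      atTop (nhds 0) := by
  classical
  obtain ⟨C, hCtop, hC⟩ := hbd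
  have hp0 : (0:ℝ) < p := lt_trans one_pos hp
  have hsp : (0:ℝ) < s * p := mul_pos hs0 hp0
  have hspp : s * p < p := by nlinarith
  have hNpos : (0:ℝ) < (N:ℝ) := by exact_mod_cast hN
  set r : ℝ := (N:ℝ) + s * p with hrdef
  have hr0 : (0:ℝ) < r := by rw [hrdef]; linarith
  have hrN : (N:ℝ) < r := by rw [hrdef]; linarith
  -- properties of φ = η ^ p
  obtain ⟨A, hAb⟩ : ∃ A, ∀ x, ‖η x‖ ≤ A := hsupp.exists_bound_of_continuous hsm.continuous
  have hA0 : 0 ≤ A := le_trans (norm_nonneg _) (hAb 0)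
  obtain ⟨K, hK⟩ : ∃ K, LipschitzWith K η :=
    hsm.lipschitzWith_of_hasCompactSupport hsupp (by simp)
  set L : ℝ := p * A ^ (p - 1) * (K : ℝ) with hLdef
  have hL0 : 0 ≤ L := by
    rw [hLdef]
    have : (0:ℝ) ≤ A ^ (p - 1) := Real.rpow_nonneg hA0 _
    positivity
  have hφlip : ∀ x y : Rn N, |η x ^ p - η y ^ p| ≤ L * ‖x - y‖ := by
    intro x y
    calc |η x ^ p - η y ^ p| ≤ p * A ^ (p - 1) * |η x - η y| := by
          refine rpow_abs_sub_le hp.le ?_ ?_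
          · exact (Real.norm_eq_abs (η x)) ▸ hAb x
          · exact (Real.norm_eq_abs (η y)) ▸ hAb y
      _ ≤ p * A ^ (p - 1) * ((K : ℝ) * ‖x - y‖) := by
          refine mul_le_mul_of_nonneg_left ?_ ?_
          · have := hK.dist_le_mul x y
            rwa [Real.dist_eq, dist_eq_norm] at this
          · have : (0:ℝ) ≤ A ^ (p - 1) := Real.rpow_nonneg hA0 _
            positivity
      _ = L * ‖x - y‖ := by rw [hLdef]; ring
  set M : ℝ := A ^ p with hMdef
  have hM0 : 0 ≤ M := Real.rpow_nonneg hA0 _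
  have hφbd : ∀ x : Rn N, |η x ^ p| ≤ M := by
    intro x
    calc |η x ^ p| ≤ |η x| ^ p := Real.abs_rpow_le_abs_rpow _ _
      _ ≤ M := by
          rw [hMdef]
          exact Real.rpow_le_rpow (abs_nonneg _) ((Real.norm_eq_abs (η x)) ▸ hAb x) hp0.le
  -- radius of support
  obtain ⟨R0', hR0'⟩ := hsupp.isBounded.subset_ball (0 : Rn N)
  set R0 : ℝ := max R0' 1 with hR0def
  have hR0ge1 : (1:ℝ) ≤ R0 := le_max_right _ _
  have hφ0 : ∀ x : Rn N, R0 ≤ ‖x‖ → η x ^ p = 0 := by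
    intro x hx
    have hnot : x ∉ tsupport η := by
      intro hmem
      have := hR0' hmem
      rw [Metric.mem_ball, dist_zero_right] at this
      have : ‖x‖ < R0 := lt_of_lt_of_le this (le_max_left _ _)
      linarith
    rw [image_eq_zero_of_notMem_tsupport hnot, Real.zero_rpow hp0.ne']
  -- the inner integral D
  set D : Rn N → ENNReal := fun y => ∫⁻ x : Rn N,
    ENNReal.ofReal (|η x ^ p - η y ^ p| ^ p / ‖x - y‖ ^ r) with hDdef
  have hDm : Measurable D := by
    have : Measurable fun q : Rn N × Rn N =>
        ENNReal.ofReal (|η q.2 ^ p - η q.1 ^ p| ^ p / ‖q.2 - q.1‖ ^ r) := by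
      have hηm : Measurable η := hsm.continuous.measurable
      fun_prop
    exact this.lintegral_prod_right'
  -- kernel domination
  set h : Rn N → ENNReal := fun z => if ‖z‖ < 1
    then ENNReal.ofReal (L ^ p * ‖z‖ ^ (p - r))
    else ENNReal.ofReal ((2 * M) ^ p * ‖z‖ ^ (-r)) with hhdef
  have hpoint : ∀ y x : Rn N,
      ENNReal.ofReal (|η x ^ p - η y ^ p| ^ p / ‖x - y‖ ^ r) ≤ h (x - y) := by
    intro y x
    rcases eq_or_ne x y with rfl | hxy
    · have : |η x ^ p - η x ^ p| ^ p = 0 := by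
        rw [sub_self, abs_zero, Real.zero_rpow hp0.ne']
      rw [this, zero_div, ENNReal.ofReal_zero]
      exact zero_le
    · have hz0 : 0 < ‖x - y‖ := by rw [norm_pos_iff]; exact sub_ne_zero.2 hxy
      by_cases hz : ‖x - y‖ < 1
      · rw [hhdef]
        simp only [if_pos hz]
        refine ENNReal.ofReal_le_ofReal ?_
        rw [div_le_iff₀ (Real.rpow_pos_of_pos hz0 r)]
        calc |η x ^ p - η y ^ p| ^ p ≤ (L * ‖x - y‖) ^ p :=
              Real.rpow_le_rpow (abs_nonneg _) (hφlip x y) hp0.le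
          _ = L ^ p * ‖x - y‖ ^ p := Real.mul_rpow hL0 (norm_nonneg _)
          _ = L ^ p * ‖x - y‖ ^ (p - r) * ‖x - y‖ ^ r := by
              rw [mul_assoc, ← Real.rpow_add hz0, sub_add_cancel]
      · rw [hhdef]
        simp only [if_neg hz]
        push_neg at hz
        refine ENNReal.ofReal_le_ofReal ?_
        rw [div_le_iff₀ (Real.rpow_pos_of_pos hz0 r)]
        calc |η x ^ p - η y ^ p| ^ p ≤ (2 * M) ^ p := by
              refine Real.rpow_le_rpow (abs_nonneg _) ?_ hp0.le
              calc |η x ^ p - η y ^ p| ≤ |η x ^ p| + |η y ^ p| := abs_sub _ _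
                _ ≤ M + M := add_le_add (hφbd _) (hφbd _)
                _ = 2 * M := by ring
          _ = (2 * M) ^ p * ‖x - y‖ ^ (-r) * ‖x - y‖ ^ r := by
              rw [mul_assoc, ← Real.rpow_add hz0, neg_add_cancel, Real.rpow_zero, mul_one]
  have hhm : Measurable h := by
    rw [hhdef]
    refine Measurable.ite (measurableSet_lt (by fun_prop) measurable_const) ?_ ?_ <;> fun_prop
  -- uniform bound on D
  set C0 : ENNReal := ∫⁻ z : Rn N, h z with hC0def
  have hC0fin : C0 < ⊤ := by
    rw [hC0def, ← lintegral_add_compl h (measurableSet_ball (x := (0:Rn N)) (ε := 1))]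
    refine ENNReal.add_lt_top.2 ⟨?_, ?_⟩
    · calc ∫⁻ z : Rn N in Metric.ball 0 1, h z
          ≤ ∫⁻ z : Rn N in Metric.ball 0 1,
              ENNReal.ofReal (L ^ p) * ENNReal.ofReal (‖z‖ ^ (-(r - p))) := by
            refine setLIntegral_mono' measurableSet_ball fun z hz => ?_
            rw [Metric.mem_ball, dist_zero_right] at hz
            rw [hhdef]
            simp only [if_pos hz]
            rw [← ENNReal.ofReal_mul (Real.rpow_nonneg hL0 p)]
            exact ENNReal.ofReal_le_ofReal (le_of_eq (by rw [neg_sub]))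
        _ = ENNReal.ofReal (L ^ p) * ∫⁻ z : Rn N in Metric.ball 0 1,
              ENNReal.ofReal (‖z‖ ^ (-(r - p))) :=
            lintegral_const_mul' _ _ ENNReal.ofReal_ne_top
        _ < ⊤ := ENNReal.mul_lt_top ENNReal.ofReal_lt_top
            (lint_ball_rpow N hN (by rw [hrdef]; linarith))
    · calc ∫⁻ z : Rn N in (Metric.ball 0 1)ᶜ, h z
          ≤ ∫⁻ z : Rn N in (Metric.ball 0 1)ᶜ,
              ENNReal.ofReal ((2 * M) ^ p) * ENNReal.ofReal (‖z‖ ^ (-r)) := by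
            refine setLIntegral_mono' measurableSet_ball.compl fun z hz => ?_
            rw [Set.mem_compl_iff, Metric.mem_ball, dist_zero_right, not_lt] at hz
            rw [hhdef]
            simp only [if_neg (not_lt.2 hz)]
            rw [← ENNReal.ofReal_mul (Real.rpow_nonneg (by linarith) p)]
        _ = ENNReal.ofReal ((2 * M) ^ p) * ∫⁻ z : Rn N in (Metric.ball 0 1)ᶜ,
              ENNReal.ofReal (‖z‖ ^ (-r)) :=
            lintegral_const_mul' _ _ ENNReal.ofReal_ne_top
        _ < ⊤ := ENNReal.mul_lt_top ENNReal.ofReal_lt_top (lint_compl_rpow N hN hrN)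
  have hDC0 : ∀ y, D y ≤ C0 := by
    intro y
    rw [hDdef, hC0def]
    calc (∫⁻ x : Rn N, ENNReal.ofReal (|η x ^ p - η y ^ p| ^ p / ‖x - y‖ ^ r))
        ≤ ∫⁻ x : Rn N, h (x - y) := lintegral_mono fun x => hpoint y x
      _ = ∫⁻ z : Rn N, h z := lintegral_sub_right_eq_self h y
  -- decay of D
  have hDdecay : ∀ y : Rn N, 2 * R0 ≤ ‖y‖ →
      D y ≤ ENNReal.ofReal (M ^ p * 4 ^ r) * volume (Metric.closedBall (0:Rn N) R0)
        * ENNReal.ofReal ((1 + ‖y‖) ^ (-r)) := by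
    intro y hy
    have hy1 : 1 ≤ ‖y‖ := le_trans (by linarith) hy
    have hy0 : (0:ℝ) < ‖y‖ := lt_of_lt_of_le one_pos hy1
    have hφy : η y ^ p = 0 := hφ0 y (by linarith)
    have hpt : ∀ x : Rn N, ENNReal.ofReal (|η x ^ p - η y ^ p| ^ p / ‖x - y‖ ^ r)
        ≤ Set.indicator (Metric.closedBall (0:Rn N) R0)
            (fun _ => ENNReal.ofReal (M ^ p * 4 ^ r * (1 + ‖y‖) ^ (-r))) x := by
      intro x
      by_cases hx : x ∈ Metric.closedBall (0:Rn N) R0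
      · rw [Set.indicator_of_mem hx]
        have hxR : ‖x‖ ≤ R0 := by rwa [Metric.mem_closedBall, dist_zero_right] at hx
        have hxy : ‖y‖ / 2 ≤ ‖x - y‖ := by
          have h1 : ‖y‖ - ‖x‖ ≤ ‖y - x‖ := norm_sub_norm_le y x
          rw [← norm_sub_rev x y] at h1
          linarith
        have hxy0 : (0:ℝ) < ‖x - y‖ := lt_of_lt_of_le (by linarith) hxy
        refine ENNReal.ofReal_le_ofReal ?_
        have hnum : |η x ^ p - η y ^ p| ^ p ≤ M ^ p := by
          refine Real.rpow_le_rpow (abs_nonneg _) ?_ hp0.le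
          rw [hφy, sub_zero]
          exact hφbd x
        have hden : (‖y‖ / 2) ^ r ≤ ‖x - y‖ ^ r :=
          Real.rpow_le_rpow (by positivity) hxy hr0.le
        calc |η x ^ p - η y ^ p| ^ p / ‖x - y‖ ^ r ≤ M ^ p / (‖y‖ / 2) ^ r :=
              div_le_div₀ (Real.rpow_nonneg hM0 p) hnum
                (Real.rpow_pos_of_pos (by positivity) r) hden
          _ ≤ M ^ p * 4 ^ r * (1 + ‖y‖) ^ (-r) := by
              rw [div_le_iff₀ (Real.rpow_pos_of_pos (by positivity) r)]
              have h4 : (1 + ‖y‖) ≤ 4 * (‖y‖ / 2) := by linarith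
              have h5 : (1 + ‖y‖) ^ r ≤ (4 * (‖y‖ / 2)) ^ r :=
                Real.rpow_le_rpow (by positivity) h4 hr0.le
              rw [Real.mul_rpow (by norm_num) (by positivity)] at h5
              have h6 : (1 + ‖y‖) ^ r * (1 + ‖y‖) ^ (-r) = 1 := by
                rw [Real.rpow_neg (by positivity),
                  mul_inv_cancel₀ (ne_of_gt (Real.rpow_pos_of_pos (by positivity) r))]
              calc M ^ p = M ^ p * ((1 + ‖y‖) ^ r * (1 + ‖y‖) ^ (-r)) := by
                    rw [h6, mul_one]
                _ ≤ M ^ p * ((4 ^ r * (‖y‖ / 2) ^ r) * (1 + ‖y‖) ^ (-r)) := by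
                    refine mul_le_mul_of_nonneg_left
                      (mul_le_mul_of_nonneg_right h5 ?_) (Real.rpow_nonneg hM0 p)
                    exact Real.rpow_nonneg (by positivity) _
                _ = M ^ p * 4 ^ r * (1 + ‖y‖) ^ (-r) * (‖y‖ / 2) ^ r := by ring
      · rw [Set.indicator_of_notMem hx]
        have hxR : R0 ≤ ‖x‖ := by
          rw [Metric.mem_closedBall, dist_zero_right, not_le] at hx
          exact hx.le
        rw [hφ0 x hxR, hφy, sub_zero, abs_zero, Real.zero_rpow hp0.ne', zero_div,
          ENNReal.ofReal_zero]
    calc D y ≤ ∫⁻ x : Rn N, Set.indicator (Metric.closedBall (0:Rn N) R0)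
          (fun _ => ENNReal.ofReal (M ^ p * 4 ^ r * (1 + ‖y‖) ^ (-r))) x := by
          rw [hDdef]; exact lintegral_mono hpt
      _ = ENNReal.ofReal (M ^ p * 4 ^ r * (1 + ‖y‖) ^ (-r))
            * volume (Metric.closedBall (0:Rn N) R0) := by
          rw [lintegral_indicator measurableSet_closedBall, setLIntegral_const]
      _ = ENNReal.ofReal (M ^ p * 4 ^ r) * volume (Metric.closedBall (0:Rn N) R0)
            * ENNReal.ofReal ((1 + ‖y‖) ^ (-r)) := by
          rw [ENNReal.ofReal_mul (by positivity), mul_right_comm]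
  -- global decay bound
  set C2 : ENNReal := C0 * ENNReal.ofReal ((1 + 2 * R0) ^ r)
    + ENNReal.ofReal (M ^ p * 4 ^ r) * volume (Metric.closedBall (0:Rn N) R0) with hC2def
  have hC2top : C2 ≠ ⊤ := by
    rw [hC2def]
    refine ENNReal.add_ne_top.2 ⟨?_, ?_⟩
    · exact (ENNReal.mul_lt_top hC0fin ENNReal.ofReal_lt_top).ne
    · exact (ENNReal.mul_lt_top ENNReal.ofReal_lt_top measure_closedBall_lt_top).ne
  have hDC2 : ∀ y, D y ≤ C2 * ENNReal.ofReal ((1 + ‖y‖) ^ (-r)) := by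
    intro y
    rcases le_or_gt (2 * R0) ‖y‖ with hy | hy
    · refine le_trans (hDdecay y hy) ?_
      rw [hC2def]
      exact mul_le_mul_left (le_add_left le_rfl) _
    · have h6 : (1 + ‖y‖) ^ r * (1 + ‖y‖) ^ (-r) = 1 := by
        rw [Real.rpow_neg (by positivity),
          mul_inv_cancel₀ (ne_of_gt (Real.rpow_pos_of_pos (by positivity) r))]
      calc D y ≤ C0 := hDC0 y
        _ = C0 * (ENNReal.ofReal ((1 + ‖y‖) ^ r) * ENNReal.ofReal ((1 + ‖y‖) ^ (-r))) := by
            rw [← ENNReal.ofReal_mul (Real.rpow_nonneg (by positivity) r), h6,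
              ENNReal.ofReal_one, mul_one]
        _ ≤ (C0 * ENNReal.ofReal ((1 + 2 * R0) ^ r)) * ENNReal.ofReal ((1 + ‖y‖) ^ (-r)) := by
            rw [← mul_assoc]
            refine mul_le_mul_left (mul_le_mul_right
              (ENNReal.ofReal_le_ofReal
                (Real.rpow_le_rpow (by positivity) (by linarith) hr0.le)) _) _
        _ ≤ C2 * ENNReal.ofReal ((1 + ‖y‖) ^ (-r)) := by
            rw [hC2def]
            exact mul_le_mul_left le_self_add _
  -- conjugate exponents
  set q : ℝ := (N:ℝ) / ((N:ℝ) - s * p) with hqdef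
  set q' : ℝ := (N:ℝ) / (s * p) with hq'def
  have hNsp0 : (0:ℝ) < (N:ℝ) - s * p := by linarith
  have hq1 : 1 < q := (one_lt_div hNsp0).2 (by linarith)
  have hq'0 : 0 < q' := div_pos hNpos hsp
  have hpq : Real.HolderConjugate q q' := by
    constructor
    · rw [hqdef, hq'def, inv_div, inv_div, ← add_div, sub_add_cancel,
        div_self hNpos.ne', inv_one]
    · exact lt_trans one_pos hq1
    · exact hq'0
  -- finiteness of ∫ D^{q'}
  have hrq' : (N:ℝ) < r * q' := by
    rw [hrdef, hq'def, mul_div_assoc']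
    rw [lt_div_iff₀ hsp]
    nlinarith [mul_pos hNpos hNpos]
  have hGfin : ∫⁻ y : Rn N, D y ^ q' < ⊤ := by
    calc ∫⁻ y : Rn N, D y ^ q'
        ≤ ∫⁻ y : Rn N, (C2 * ENNReal.ofReal ((1 + ‖y‖) ^ (-r))) ^ q' :=
          lintegral_mono fun y => ENNReal.rpow_le_rpow (hDC2 y) hq'0.le
      _ = C2 ^ q' * ∫⁻ y : Rn N, ENNReal.ofReal ((1 + ‖y‖) ^ (-(r * q'))) := by
          rw [← lintegral_const_mul' _ _ (ENNReal.rpow_ne_top_of_nonneg hq'0.le hC2top)]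
          refine lintegral_congr fun y => ?_
          rw [ENNReal.mul_rpow_of_nonneg _ _ hq'0.le,
            ENNReal.ofReal_rpow_of_nonneg (Real.rpow_nonneg (by positivity) _) hq'0.le,
            ← Real.rpow_mul (by positivity), neg_mul]
      _ < ⊤ := by
          refine ENNReal.mul_lt_top (ENNReal.rpow_lt_top_of_nonneg hq'0.le hC2top) ?_
          exact finite_integral_one_add_norm
            (by rw [finrank_euclideanSpace_fin]; exact hrq')
  -- tail of ∫ D^{q'} tends to zero
  have hTtendsto : Tendsto (fun k : ℕ =>
      ∫⁻ y : Rn N in (Metric.ball (0:Rn N) (k:ℝ))ᶜ, D y ^ q') atTop (nhds 0) := by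
    have hq'm : Measurable fun y => D y ^ q' := by fun_prop
    set ν := volume.withDensity fun y : Rn N => D y ^ q' with hν
    have happ : ∀ k : ℕ, (∫⁻ y : Rn N in (Metric.ball (0:Rn N) (k:ℝ))ᶜ, D y ^ q')
        = ν ((Metric.ball (0:Rn N) (k:ℝ))ᶜ) := fun k =>
      (withDensity_apply _ measurableSet_ball.compl).symm
    simp_rw [happ]
    have hνfin : ν ((Metric.ball (0:Rn N) ((0:ℕ):ℝ))ᶜ) ≠ ⊤ := by
      refine (lt_of_le_of_lt (measure_mono (Set.subset_univ _)) ?_).ne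
      rw [hν, withDensity_apply _ MeasurableSet.univ, Measure.restrict_univ]
      exact hGfin
    have h1 := tendsto_measure_iInter_atTop (μ := ν)
      (fun k : ℕ => measurableSet_ball.compl.nullMeasurableSet)
      (fun i j hij => Set.compl_subset_compl.2
        (Metric.ball_subset_ball (by exact_mod_cast hij)))
      ⟨0, hνfin⟩
    have h2 : (⋂ k : ℕ, (Metric.ball (0:Rn N) (k:ℝ))ᶜ) = ∅ := by
      ext y
      simp only [Set.mem_iInter, Set.mem_compl_iff, Metric.mem_ball, dist_zero_right,
        Set.mem_empty_iff_false, iff_false, not_forall, not_not]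
      exact ⟨⌊‖y‖⌋₊ + 1, by push_cast; exact Nat.lt_floor_add_one ‖y‖⟩
    rw [h2, measure_empty] at h1
    exact h1
  -- the weighted integrals, with D folded in
  show Tendsto (fun n => ∫⁻ y : Rn N, ENNReal.ofReal (|u n y| ^ p) * D y) atTop (nhds 0)
  rw [ENNReal.tendsto_nhds_zero]
  intro ε hε
  rcases eq_or_ne ε ⊤ with rfl | hεtop
  · filter_upwards with n
    exact le_top
  have hε2 : (0:ENNReal) < ε / 2 := ENNReal.div_pos hε.ne' ENNReal.ofNat_ne_top
  set C' : ENNReal := C ^ (1 / q) + 1 with hC'def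
  have hC'0 : C' ≠ 0 := by
    rw [hC'def]
    simp
  have hC'top : C' ≠ ⊤ := by
    rw [hC'def]
    exact ENNReal.add_ne_top.2
      ⟨(ENNReal.rpow_lt_top_of_nonneg (by positivity) hCtop.ne).ne, ENNReal.one_ne_top⟩
  set δ : ENNReal := (ε / 2 / C') ^ q' with hδdef
  have hδ0 : 0 < δ := by
    rw [hδdef]
    refine ENNReal.rpow_pos (ENNReal.div_pos hε2.ne' hC'top) ?_
    exact (ENNReal.div_lt_top (ENNReal.div_lt_top hεtop two_ne_zero).ne hC'0).ne
  obtain ⟨k, hk1, hkT⟩ : ∃ k : ℕ, 1 ≤ k ∧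
      (∫⁻ y : Rn N in (Metric.ball (0:Rn N) (k:ℝ))ᶜ, D y ^ q') ≤ δ :=
    ((eventually_ge_atTop 1).and ((ENNReal.tendsto_nhds_zero.mp hTtendsto) δ hδ0)).exists
  have hk0 : (0:ℝ) < (k:ℝ) := by exact_mod_cast Nat.lt_of_lt_of_le Nat.zero_lt_one hk1
  -- tail estimate via Hölder
  have htail : ∀ n, ∫⁻ y : Rn N in (Metric.ball (0:Rn N) (k:ℝ))ᶜ,
      ENNReal.ofReal (|u n y| ^ p) * D y ≤ ε / 2 := by
    intro n
    have hFm : AEMeasurable (fun y : Rn N => ENNReal.ofReal (|u n y| ^ p))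
        (volume.restrict (Metric.ball (0:Rn N) (k:ℝ))ᶜ) := by
      have hum := hu n
      fun_prop
    have hHo := ENNReal.lintegral_mul_le_Lp_mul_Lq
      (volume.restrict (Metric.ball (0:Rn N) (k:ℝ))ᶜ) hpq hFm hDm.aemeasurable
    simp only [Pi.mul_apply] at hHo
    have hFq : (∫⁻ y : Rn N in (Metric.ball (0:Rn N) (k:ℝ))ᶜ,
        (ENNReal.ofReal (|u n y| ^ p)) ^ q) ≤ C := by
      calc (∫⁻ y : Rn N in (Metric.ball (0:Rn N) (k:ℝ))ᶜ,
          (ENNReal.ofReal (|u n y| ^ p)) ^ q)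
          ≤ ∫⁻ y : Rn N, (ENNReal.ofReal (|u n y| ^ p)) ^ q :=
            setLIntegral_le_lintegral _ _
        _ = ∫⁻ y : Rn N, ENNReal.ofReal (|u n y| ^ (pStar N s p 0)) := by
            refine lintegral_congr fun y => ?_
            rw [ENNReal.ofReal_rpow_of_nonneg (Real.rpow_nonneg (abs_nonneg _) _)
              (le_of_lt (lt_trans one_pos hq1)), ← Real.rpow_mul (abs_nonneg _)]
            congr 1
            rw [pStar, hqdef, sub_zero, mul_div_assoc]
        _ ≤ C := hC n
    calc ∫⁻ y : Rn N in (Metric.ball (0:Rn N) (k:ℝ))ᶜ,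
        ENNReal.ofReal (|u n y| ^ p) * D y
        ≤ (∫⁻ y : Rn N in (Metric.ball (0:Rn N) (k:ℝ))ᶜ,
            (ENNReal.ofReal (|u n y| ^ p)) ^ q) ^ (1 / q)
          * (∫⁻ y : Rn N in (Metric.ball (0:Rn N) (k:ℝ))ᶜ, D y ^ q') ^ (1 / q') := hHo
      _ ≤ C' * δ ^ (1 / q') := by
          refine mul_le_mul' ?_ (ENNReal.rpow_le_rpow hkT (by positivity))
          rw [hC'def]
          exact le_trans (ENNReal.rpow_le_rpow hFq (by positivity)) le_self_add
      _ = C' * (ε / 2 / C') := by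
          rw [hδdef, ← ENNReal.rpow_mul, mul_one_div, div_self hq'0.ne', ENNReal.rpow_one]
      _ = ε / 2 := by
          rw [mul_comm]
          exact ENNReal.div_mul_cancel hC'0 hC'top
  -- ball part tends to zero
  have hb2 : Tendsto (fun n => ∫⁻ y : Rn N in Metric.ball (0:Rn N) (k:ℝ),
      ENNReal.ofReal (|u n y| ^ p) * D y) atTop (nhds 0) := by
    have hub : ∀ n, ∫⁻ y : Rn N in Metric.ball (0:Rn N) (k:ℝ),
        ENNReal.ofReal (|u n y| ^ p) * D y
        ≤ C0 * ∫⁻ y : Rn N in Metric.ball (0:Rn N) (k:ℝ),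
            ENNReal.ofReal (|u n y| ^ p) := by
      intro n
      calc ∫⁻ y : Rn N in Metric.ball (0:Rn N) (k:ℝ), ENNReal.ofReal (|u n y| ^ p) * D y
          ≤ ∫⁻ y : Rn N in Metric.ball (0:Rn N) (k:ℝ),
              C0 * ENNReal.ofReal (|u n y| ^ p) := by
            refine setLIntegral_mono' measurableSet_ball fun y _ => ?_
            rw [mul_comm]
            exact mul_le_mul_left (hDC0 y) _
        _ = C0 * ∫⁻ y : Rn N in Metric.ball (0:Rn N) (k:ℝ), ENNReal.ofReal (|u n y| ^ p) :=
            lintegral_const_mul' _ _ hC0fin.ne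
    have h0 : Tendsto (fun n => C0 * ∫⁻ y : Rn N in Metric.ball (0:Rn N) (k:ℝ),
        ENNReal.ofReal (|u n y| ^ p)) atTop (nhds 0) := by
      have := ENNReal.Tendsto.const_mul (hloc (k:ℝ) hk0) (Or.inr hC0fin.ne)
      simpa only [mul_zero] using this
    exact tendsto_of_tendsto_of_tendsto_of_le_of_le tendsto_const_nhds h0
      (fun n => zero_le) hub
  filter_upwards [(ENNReal.tendsto_nhds_zero.mp hb2) (ε / 2) hε2] with n hn
  calc ∫⁻ y : Rn N, ENNReal.ofReal (|u n y| ^ p) * D y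
      = (∫⁻ y : Rn N in Metric.ball (0:Rn N) (k:ℝ), ENNReal.ofReal (|u n y| ^ p) * D y)
        + ∫⁻ y : Rn N in (Metric.ball (0:Rn N) (k:ℝ))ᶜ,
            ENNReal.ofReal (|u n y| ^ p) * D y :=
      (lintegral_add_compl _ measurableSet_ball).symm
    _ ≤ ε / 2 + ε / 2 := add_le_add hn (htail n)
    _ = ε := ENNReal.add_halves ε

end
end
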